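/- arXiv:2202.10530 — 7 statements merged into one kernel-verified Lean document; each statement's English description precedes it below -/
import Mathlib

section
/- For a real number D > 0, the arrangement S_D is nonempty if and only if D is a positive integer and there exists α in the ring of integers 𝒪 of K such that the norm N_{K/ℚ}(α) is congruent to D modulo Δ (i.e., Δ divides N_{K/ℚ}(α) − D in ℤ). -/
open Complex NumberField ComplexConjugate
open scoped nonZeroDivisors

noncomputable section

/-- `i·√t` for a real number `t` (so `isqrt |Δ| = √Δ` and `isqrt D = i√D`). -/
def isqrt (t : ℝ) : ℂ := Complex.I * Real.sqrt t

/-- `(ζ, r̂, r)` is an oriented circle: `|ζ|² - r̂·r = 1`. -/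
def IsOrientedCircle (ζ : ℂ) (rhat r : ℝ) : Prop :=
  Complex.normSq ζ - rhat * r = 1

/-- The point `z ∈ ℂ` lies on the oriented circle `(ζ, r̂, r)`:
`r·|z|² - 2·Re(conj z · ζ) + r̂ = 0`. -/
def LiesOn (z : ℂ) (ζ : ℂ) (rhat r : ℝ) : Prop :=
  r * Complex.normSq z - 2 * (conj z * ζ).re + rhat = 0

/-- Membership of the oriented circle `(ζ, r̂, r)` in the arrangement `S_D`:
`i√D·ζ ∈ ι(𝒪)` and `i√D·r̂, i√D·r ∈ √Δ·ℤ`, where `√Δ = i√|Δ|`. -/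
def MemSD (K : Type*) [Field K] [NumberField K] (ι : K →+* ℂ) (D : ℝ)
    (ζ : ℂ) (rhat r : ℝ) : Prop :=
  IsOrientedCircle ζ rhat r ∧
  (∃ a : 𝓞 K, ι (a : K) = isqrt D * ζ) ∧
  (∃ m : ℤ, isqrt D * (rhat : ℂ) = isqrt |(NumberField.discr K : ℝ)| * (m : ℂ)) ∧
  (∃ m : ℤ, isqrt D * (r : ℂ) = isqrt |(NumberField.discr K : ℝ)| * (m : ℂ))

/-- The Minkowski pairing `⟨v_C, v_C'⟩_Q` of two oriented circles, a real number. -/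
def pairingQ (ζ : ℂ) (rhat r : ℝ) (ζ' : ℂ) (rhat' r' : ℝ) : ℝ :=
  ((ζ * conj ζ' + conj ζ * ζ').re - rhat * r' - r * rhat') / 2

/-- The spin matrix `N(M)` of `M = [[α, γ], [β, δ]]`. -/
def spin (α β γ δ : ℂ) : Matrix (Fin 4) (Fin 4) ℂ :=
  !![α * conj δ, β * conj γ, α * conj γ, β * conj δ;
     conj β * γ, conj α * δ, conj α * γ, conj β * δ;
     α * conj β, conj α * β, (Complex.normSq α : ℂ), (Complex.normSq β : ℂ);
     γ * conj δ, conj γ * δ, (Complex.normSq γ : ℂ), (Complex.normSq δ : ℂ)]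

/-- The row vector `v_C = [ζ, conj ζ, r̂, r]` associated to an oriented circle. -/
def vC (ζ : ℂ) (rhat r : ℝ) : Fin 4 → ℂ := ![ζ, conj ζ, (rhat : ℂ), (r : ℂ)]

/-- The fractional ideal of `K` generated by two elements. -/
def gen2 (K : Type*) [Field K] [NumberField K] (x y : K) :
    FractionalIdeal (𝓞 K)⁰ K :=
  FractionalIdeal.spanSingleton (𝓞 K)⁰ x + FractionalIdeal.spanSingleton (𝓞 K)⁰ y

/-- The fractional ideal of `K` generated by four elements (e.g. the entries of a
`2×2` matrix). -/
def gen4 (K : Type*) [Field K] [NumberField K] (a b c d : K) :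
    FractionalIdeal (𝓞 K)⁰ K :=
  FractionalIdeal.spanSingleton (𝓞 K)⁰ a + FractionalIdeal.spanSingleton (𝓞 K)⁰ b +
    FractionalIdeal.spanSingleton (𝓞 K)⁰ c + FractionalIdeal.spanSingleton (𝓞 K)⁰ d

/-- The class of a fractional ideal in the class group of `K`
(junk value `1` for the zero ideal). -/
def classOf (K : Type*) [Field K] [NumberField K]
    (I : FractionalIdeal (𝓞 K)⁰ K) : ClassGroup (𝓞 K) :=
  letI := Classical.dec (I = 0)
  if h : I = 0 then 1 else ClassGroup.mk K (Units.mk0 I h)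

/-!
For imaginary quadratic `K` the norm is `N(α) = |ι α|²`. Writing `ι a = i√D·ζ`, `i√D·r̂ = √Δ·m`
and `i√D·r = √Δ·m'`, the circle relation `|ζ|² - r̂·r = 1` multiplied by `D` reads
`N(a) = D + |Δ|·m·m'`, so `D` is an integer congruent to a norm modulo `Δ`. Conversely, if
`N(α) = D + Δ·k`, the circle `(ι α / i√D, √|Δ|/√D, -k·√|Δ|/√D)` lies in `S_D`.
-/

-- The two `ℚ`-embeddings of `K` into `ℂ` are `ι` and `conj ∘ ι`.
lemma ratCast_norm_eq_normSq {K : Type*} [Field K] [NumberField K] (ι : K →+* ℂ)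
    (hdeg : Module.finrank ℚ K = 2) (him : ∃ x : K, (ι x).im ≠ 0) (x : K) :
    ((Algebra.norm ℚ x : ℚ) : ℝ) = normSq (ι x) := by
  classical
  let f : K →ₐ[ℚ] ℂ := ι.toRatAlgHom
  let g : K →ₐ[ℚ] ℂ := ((starRingEnd ℂ).comp ι).toRatAlgHom
  have hfg : f ≠ g := by
    obtain ⟨y, hy⟩ := him
    intro h
    have hconj : conj (ι y) = ι y := (DFunLike.congr_fun h y).symm
    exact hy (conj_eq_iff_im.mp hconj)
  have huniv : (Finset.univ : Finset (K →ₐ[ℚ] ℂ)) = {f, g} :=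
    (Finset.eq_univ_of_card _ (by rw [Finset.card_pair hfg, AlgHom.card, hdeg])).symm
  have h := Algebra.norm_eq_prod_embeddings ℚ ℂ x
  rw [huniv, Finset.prod_pair hfg] at h
  change algebraMap ℚ ℂ _ = ι x * conj (ι x) at h
  rw [mul_conj, eq_ratCast] at h
  exact_mod_cast h

lemma intCast_norm_eq_normSq {K : Type*} [Field K] [NumberField K] (ι : K →+* ℂ)
    (hdeg : Module.finrank ℚ K = 2) (him : ∃ x : K, (ι x).im ≠ 0) (α : 𝓞 K) :
    ((Algebra.norm ℤ α : ℤ) : ℝ) = normSq (ι (α : K)) := by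
  rw [← ratCast_norm_eq_normSq ι hdeg him, ← Algebra.coe_norm_int, Rat.cast_intCast]

lemma normSq_isqrt {t : ℝ} (ht : 0 ≤ t) : normSq (isqrt t) = t := by
  simp [isqrt, normSq_mul, Real.mul_self_sqrt ht]

lemma isqrt_mul_ofReal_eq_iff (a b x y : ℝ) :
    isqrt a * x = isqrt b * y ↔ √a * x = √b * y := by
  simp only [isqrt, mul_assoc, mul_right_inj' I_ne_zero]
  exact_mod_cast Iff.rfl

lemma sq_sqrt_abs_discr {K : Type*} [Field K] [NumberField K] (hΔ : discr K < 0) :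
    √|(discr K : ℝ)| ^ 2 = -discr K := by
  rw [Real.sq_sqrt (abs_nonneg _), abs_of_neg (by exact_mod_cast hΔ)]

lemma MemSD.exists_norm_eq {K : Type*} [Field K] [NumberField K] {ι : K →+* ℂ}
    (hdeg : Module.finrank ℚ K = 2) (him : ∃ x : K, (ι x).im ≠ 0) (hΔ : discr K < 0)
    {D : ℝ} (hD : 0 ≤ D) {ζ : ℂ} {rhat r : ℝ} (h : MemSD K ι D ζ rhat r) :
    ∃ (a : 𝓞 K) (k : ℤ), D = ((Algebra.norm ℤ a + discr K * k : ℤ) : ℝ) := by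
  obtain ⟨hcirc, ⟨a, ha⟩, ⟨m, hm⟩, ⟨m', hm'⟩⟩ := h
  rw [← ofReal_intCast, isqrt_mul_ofReal_eq_iff] at hm hm'
  have hsD : √D ^ 2 = D := Real.sq_sqrt hD
  have hsΔ := sq_sqrt_abs_discr hΔ
  have hDΔ : D * (rhat * r) = -discr K * (m * m') := by
    linear_combination (√D * r) * hm + (√|(discr K : ℝ)| * m) * hm' - (rhat * r) * hsD
      + (m * m' : ℝ) * hsΔ
  refine ⟨a, m * m', ?_⟩
  have hnorm : (Algebra.norm ℤ a : ℝ) = D * normSq ζ := by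
    rw [intCast_norm_eq_normSq ι hdeg him, ha, normSq_mul, normSq_isqrt hD]
  unfold IsOrientedCircle at hcirc
  push_cast
  linear_combination -hnorm - D * hcirc - hDΔ

lemma memSD_of_norm_eq {K : Type*} [Field K] [NumberField K] {ι : K →+* ℂ}
    (hdeg : Module.finrank ℚ K = 2) (him : ∃ x : K, (ι x).im ≠ 0) (hΔ : discr K < 0)
    {D : ℝ} (hD : 0 < D) (α : 𝓞 K) (k : ℤ)
    (hα : (Algebra.norm ℤ α : ℝ) = D + discr K * k) :
    MemSD K ι D (ι α / isqrt D) (√|(discr K : ℝ)| / √D) (-k * √|(discr K : ℝ)| / √D) := by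
  have hs : √D ≠ 0 := (Real.sqrt_pos.mpr hD).ne'
  have hisqrt : isqrt D ≠ 0 := by simpa [isqrt] using hs
  refine ⟨?_, ⟨α, by field_simp⟩, ⟨1, ?_⟩, ⟨-k, ?_⟩⟩
  · have hsD : √D ^ 2 = D := Real.sq_sqrt hD.le
    have hsΔ := sq_sqrt_abs_discr hΔ
    unfold IsOrientedCircle
    rw [normSq_div, normSq_isqrt hD.le, ← intCast_norm_eq_normSq ι hdeg him, hα]
    field_simp
    linear_combination (discr K * k : ℝ) * hsD + (D * k) * hsΔ
  all_goals
    rw [← ofReal_intCast, isqrt_mul_ofReal_eq_iff]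
    field_simp
    push_cast
    ring

theorem stmt_0 (K : Type*) [Field K] [NumberField K] (ι : K →+* ℂ)
    (hdeg : Module.finrank ℚ K = 2) (him : ∃ x : K, (ι x).im ≠ 0)
    (hΔ : NumberField.discr K < 0)
    (D : ℝ) (hD : 0 < D) :
    (∃ (ζ : ℂ) (rhat r : ℝ), MemSD K ι D ζ rhat r) ↔
      ∃ n : ℕ, 0 < n ∧ D = (n : ℝ) ∧
        ∃ α : 𝓞 K, (NumberField.discr K : ℤ) ∣ (Algebra.norm ℤ α - (n : ℤ)) := by
  constructor
  · rintro ⟨ζ, rhat, r, h⟩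
    obtain ⟨a, k, hDk⟩ := h.exists_norm_eq hdeg him hΔ hD.le
    set N : ℤ := Algebra.norm ℤ a + discr K * k
    have hN : 0 < N := by exact_mod_cast hDk ▸ hD
    refine ⟨N.toNat, by omega, by rw [hDk]; exact_mod_cast (Int.toNat_of_nonneg hN.le).symm, a,
      -k, ?_⟩
    rw [Int.toNat_of_nonneg hN.le]
    ring
  · rintro ⟨n, -, rfl, α, k, hk⟩
    refine ⟨_, _, _, memSD_of_norm_eq hdeg him hΔ (by positivity) α k ?_⟩
    exact_mod_cast (sub_eq_iff_eq_add'.mp hk)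
end
end

section
/- Let D > 0 and let M = [[α, γ], [β, δ]] ∈ SL₂(ℂ). Suppose every entry of the spin matrix N(M) lies in ι(𝒪). Then for every oriented circle C ∈ S_D, writing v_C·N(M) = [w₁, w₂, w₃, w₄], one has w₂ = conj(w₁), w₃ and w₄ are real, |w₁|² − w₃·w₄ = 1, and the oriented circle (w₁, w₃, w₄) belongs to S_D. (In particular, the extended Bianchi group preserves S_D.) -/
open Complex NumberField ComplexConjugate
open scoped nonZeroDivisors

noncomputable section

/-!
The spin matrix commutes with the symmetry `conj ∘ (swap of the first two coordinates)` and
scales the form `|ζ|² - r̂ r` by `|det M|²`, so `v_C · N(M)` is again the vector of an oriented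
circle. For integrality, let `τ` be the nontrivial automorphism of `K`, which `ι` turns into
complex conjugation. Then `ι(𝒪)` is stable under conjugation, its real elements are rational
integers, and for an integral basis `b` every `a - τ a` is an integral multiple of
`b₀ τb₁ - τb₀ b₁`, whose square is `Δ`; hence `z - conj z ∈ √Δ ℤ` for `z ∈ ι(𝒪)`.
Multiplying the coordinates of `v_C · N(M)` by `i√D` and using that `i√D` is purely imaginary
then puts them in `ι(𝒪)` and `√Δ ℤ`.
-/

open Matrix Algebra NumberField.ComplexEmbedding

lemma conj_isqrt (t : ℝ) : conj (isqrt t) = -isqrt t := by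
  simp [isqrt]

lemma isqrt_abs_sq {t : ℝ} (ht : t ≤ 0) : isqrt |t| ^ 2 = t := by
  rw [isqrt, mul_pow, I_sq, ← ofReal_pow, Real.sq_sqrt (abs_nonneg t), abs_of_nonpos ht]
  push_cast
  ring

section SpinMatrix

lemma star_vecMul_apply_of_star_eq {R n : Type*} [CommSemiring R] [StarRing R] [Fintype n]
    (σ : Equiv.Perm n) {v : n → R} {N : Matrix n n R} (hv : ∀ i, star (v i) = v (σ i))
    (hN : ∀ i j, star (N i j) = N (σ i) (σ j)) (j : n) :
    star ((v ᵥ* N) j) = (v ᵥ* N) (σ j) := by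
  simp only [vecMul, dotProduct, star_sum, star_mul', hv, hN]
  exact Equiv.sum_comp σ fun i => v i * N i (σ j)

variable (α β γ δ ζ : ℂ) (rhat r : ℝ)

lemma conj_spin (i j : Fin 4) :
    conj (spin α β γ δ i j) = spin α β γ δ (Equiv.swap 0 1 i) (Equiv.swap 0 1 j) := by
  fin_cases i <;> fin_cases j <;> simp [spin, Equiv.swap_apply_of_ne_of_ne, mul_comm]

lemma conj_vC (i : Fin 4) : conj (vC ζ rhat r i) = vC ζ rhat r (Equiv.swap 0 1 i) := by
  fin_cases i <;> simp [vC, Equiv.swap_apply_of_ne_of_ne]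

lemma conj_vecMul_vC_spin (j : Fin 4) :
    conj ((vC ζ rhat r ᵥ* spin α β γ δ) j) = (vC ζ rhat r ᵥ* spin α β γ δ) (Equiv.swap 0 1 j) :=
  star_vecMul_apply_of_star_eq _ (conj_vC ζ rhat r) (conj_spin α β γ δ) j

lemma vecMul_vC_apply (N : Matrix (Fin 4) (Fin 4) ℂ) (j : Fin 4) :
    (vC ζ rhat r ᵥ* N) j = ζ * N 0 j + conj ζ * N 1 j + rhat * N 2 j + r * N 3 j := by
  simp [vecMul, dotProduct, vC, Fin.sum_univ_four]

lemma vecMul_vC_spin_quadratic_form :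
    let w := vC ζ rhat r ᵥ* spin α β γ δ
    w 0 * conj (w 0) - w 2 * w 3 =
      (α * δ - β * γ) * conj (α * δ - β * γ) * (ζ * conj ζ - rhat * r) := by
  simp only [vecMul_vC_apply, spin, ← mul_conj, of_apply, cons_val', cons_val_zero,
    cons_val_fin_one, cons_val_one, cons_val, map_add, map_sub, map_mul, conj_conj, conj_ofReal]
  ring

variable {α β γ δ ζ rhat r}

lemma isOrientedCircle_vecMul_spin (hdet : α * δ - β * γ = 1) (hC : IsOrientedCircle ζ rhat r) :
    let w := vC ζ rhat r ᵥ* spin α β γ δ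
    IsOrientedCircle (w 0) (w 2).re (w 3).re := by
  intro w
  have hw₂ : ((w 2).re : ℂ) = w 2 := conj_eq_iff_re.mp (conj_vecMul_vC_spin α β γ δ ζ rhat r 2)
  have hw₃ : ((w 3).re : ℂ) = w 3 := conj_eq_iff_re.mp (conj_vecMul_vC_spin α β γ δ ζ rhat r 3)
  have key : w 0 * conj (w 0) - w 2 * w 3 =
      (α * δ - β * γ) * conj (α * δ - β * γ) * (ζ * conj ζ - rhat * r) :=
    vecMul_vC_spin_quadratic_form α β γ δ ζ rhat r
  rw [hdet, map_one, ← hw₂, ← hw₃, mul_conj, mul_conj] at key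
  unfold IsOrientedCircle at hC ⊢
  rw [← hC, ← ofReal_inj]
  push_cast
  rw [key]
  ring

end SpinMatrix

namespace Algebra.IsQuadraticExtension

variable {F K : Type*} [Field F] [Field K] [Algebra F K] [IsQuadraticExtension F K] [IsGalois F K]
  {τ : Gal(K/F)}

lemma eq_one_or_eq_of_ne_one (hτ : τ ≠ 1) (f : Gal(K/F)) : f = 1 ∨ f = τ := by
  have hcard : Nat.card Gal(K/F) = 2 := by
    rw [IsGalois.card_aut_eq_finrank, finrank_eq_two]
  obtain ⟨g, -, hg⟩ := (Nat.card_eq_two_iff' (1 : Gal(K/F))).mp hcard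
  by_cases hf : f = 1
  · exact Or.inl hf
  · exact Or.inr ((hg f hf).trans (hg τ hτ).symm)

lemma mem_range_algebraMap_of_apply_eq_self (hτ : τ ≠ 1) {x : K} (hx : τ x = x) :
    x ∈ Set.range (algebraMap F K) := by
  rw [IsGalois.mem_range_algebraMap_iff_fixed]
  intro f
  rcases eq_one_or_eq_of_ne_one hτ f with rfl | rfl
  · rfl
  · exact hx

lemma algebraMap_trace (hτ : τ ≠ 1) (x : K) : algebraMap F K (trace F K x) = x + τ x := by
  rw [trace_eq_sum_automorphisms, Fintype.sum_eq_add 1 τ hτ.symm]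
  · rfl
  · rintro f ⟨hf1, hfτ⟩
    exact ((eq_one_or_eq_of_ne_one hτ f).elim hf1 hfτ).elim

lemma algebraMap_discr_fin_two (hτ : τ ≠ 1) (b : Fin 2 → K) :
    algebraMap F K (discr F b) = (b 0 * τ (b 1) - τ (b 0) * b 1) ^ 2 := by
  simp only [discr_def, det_fin_two, traceMatrix_apply, traceForm_apply, map_sub, map_mul,
    algebraMap_trace hτ]
  ring

end Algebra.IsQuadraticExtension

lemma Module.Basis.exists_sub_eq_smul_of_fin_two {S R : Type*} [CommRing S] [CommRing R]
    [Algebra S R] (b : Module.Basis (Fin 2) S R) (τ : R →ₐ[S] R) (a : R) :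
    ∃ k : S, a - τ a = k • (b 0 * τ (b 1) - τ (b 0) * b 1) := by
  have hrep (x : R) : x = b.repr x 0 • b 0 + b.repr x 1 • b 1 := by
    rw [← Fin.sum_univ_two (fun i => b.repr x i • b i), b.sum_repr]
  refine ⟨b.repr a 0 * b.repr 1 1 - b.repr a 1 * b.repr 1 0, ?_⟩
  have ha := hrep a
  have h1 := hrep 1
  have hτa := congrArg τ ha
  have hτne := congrArg τ h1
  simp only [map_add, map_one, Algebra.smul_def, map_sub, map_mul, AlgHom.commutes]
    at ha h1 hτa hτne ⊢
  set p := algebraMap S R (b.repr 1 0)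
  set q := algebraMap S R (b.repr 1 1)
  -- expand `a - τ a = a * τ 1 - τ a * 1` in the basis
  linear_combination a * hτne - τ a * h1 + (p * τ (b 0) + q * τ (b 1)) * ha -
    (p * b 0 + q * b 1) * hτa

section ImaginaryQuadratic

variable {K : Type*} [Field K] [NumberField K]

def ringOfIntegersImage (ι : K →+* ℂ) : Subring ℂ := (ι.comp (algebraMap (𝓞 K) K)).range

lemma exists_isConj [IsQuadraticExtension ℚ K] (ι : K →+* ℂ) : ∃ τ : Gal(K/ℚ), IsConj ι τ := by
  obtain ⟨σ, hσ⟩ := exists_comp_symm_eq_of_comp_eq (k := ℚ) ι (conjugate ι) (Subsingleton.elim _ _)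
  exact ⟨σ.symm, hσ.symm⟩

variable {ι : K →+* ℂ} {τ : Gal(K/ℚ)}

lemma NumberField.ComplexEmbedding.IsConj.apply_smul (hτ : IsConj ι τ) (a : 𝓞 K) :
    ι ((τ • a : 𝓞 K) : K) = conj (ι a) :=
  hτ.eq (a : K)

lemma conj_mem_ringOfIntegersImage (hτ : IsConj ι τ) {z : ℂ} (hz : z ∈ ringOfIntegersImage ι) :
    conj z ∈ ringOfIntegersImage ι := by
  obtain ⟨a, rfl⟩ := hz
  exact ⟨τ • a, hτ.apply_smul a⟩

variable [IsQuadraticExtension ℚ K]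

lemma exists_intCast_eq_of_mem_ringOfIntegersImage (hτ : IsConj ι τ) (hτne : τ ≠ 1) {z : ℂ}
    (hz : z ∈ ringOfIntegersImage ι) (him : z.im = 0) : ∃ n : ℤ, z = n := by
  obtain ⟨a, rfl⟩ := hz
  have hfix : τ (a : K) = a := ι.injective (by rw [hτ.eq]; exact conj_eq_iff_im.mpr him)
  obtain ⟨q, hq⟩ := IsQuadraticExtension.mem_range_algebraMap_of_apply_eq_self hτne hfix
  have hint : IsIntegral ℤ q := by
    rw [← isIntegral_algebraMap_iff (algebraMap ℚ K).injective, hq]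
    exact a.isIntegral_coe
  obtain ⟨n, rfl⟩ := IsIntegrallyClosed.isIntegral_iff.mp hint
  exact ⟨n, by simp [← hq]⟩

lemma exists_sq_eq_discr (hτ : IsConj ι τ) (hτne : τ ≠ 1) :
    ∃ d ∈ ringOfIntegersImage ι, d ^ 2 = discr K ∧
      ∀ z ∈ ringOfIntegersImage ι, ∃ k : ℤ, z - conj z = d * k := by
  have hcard : Fintype.card (Module.Free.ChooseBasisIndex ℤ (𝓞 K)) = 2 := by
    rw [← Module.finrank_eq_card_chooseBasisIndex, RingOfIntegers.rank,
      IsQuadraticExtension.finrank_eq_two]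
  let e := Fintype.equivFinOfCardEq hcard
  let b := (RingOfIntegers.basis K).reindex e
  let τ' := (MulSemiringAction.toRingHom _ (𝓞 K) τ).toIntAlgHom
  let δ := b 0 * τ' (b 1) - τ' (b 0) * b 1
  refine ⟨ι δ, ⟨δ, rfl⟩, ?_, ?_⟩
  · have hb : (fun i => (b i : K)) = integralBasis K ∘ e.symm := by
      ext i
      simp [b, integralBasis_apply, RingOfIntegers.coe_eq_algebraMap]
    have h := IsQuadraticExtension.algebraMap_discr_fin_two hτne fun i => (b i : K)
    rw [hb, discr_reindex, ← coe_discr] at h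
    rw [← map_pow, show (δ : K) = b 0 * τ (b 1) - τ (b 0) * b 1 from rfl, ← h]
    simp
  · rintro _ ⟨a, rfl⟩
    obtain ⟨k, hk⟩ := b.exists_sub_eq_smul_of_fin_two τ' a
    refine ⟨k, ?_⟩
    calc ι a - conj (ι a) = ι ((a - τ' a : 𝓞 K) : K) := by
          rw [← hτ.apply_smul]
          simp [τ']
      _ = ι δ * k := by
          rw [hk]
          simp [δ, mul_comm]

lemma isqrt_abs_discr_mem (hτ : IsConj ι τ) (hτne : τ ≠ 1) (hΔ : discr K < 0) :
    isqrt |(discr K : ℝ)| ∈ ringOfIntegersImage ι ∧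
      ∀ z ∈ ringOfIntegersImage ι, ∃ k : ℤ, z - conj z = isqrt |(discr K : ℝ)| * k := by
  obtain ⟨d, hd, hd2, hsub⟩ := exists_sq_eq_discr hτ hτne
  have hsq : d ^ 2 = isqrt |(discr K : ℝ)| ^ 2 := by
    rw [hd2, isqrt_abs_sq (by exact_mod_cast hΔ.le)]
    push_cast
    rfl
  rcases sq_eq_sq_iff_eq_or_eq_neg.mp hsq with h | h
  · exact h ▸ ⟨hd, hsub⟩
  · refine ⟨neg_eq_iff_eq_neg.mpr h ▸ neg_mem hd, fun z hz => ?_⟩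
    obtain ⟨k, hk⟩ := hsub z hz
    exact ⟨-k, by rw [hk, h]; push_cast; ring⟩

end ImaginaryQuadratic

section Integrality

variable {O : Subring ℂ} {c s ζ : ℂ} {rhat r : ℝ} {m₂ m₃ : ℤ} {N : Matrix (Fin 4) (Fin 4) ℂ}

lemma mul_vecMul_vC_mem (hconj : ∀ z ∈ O, conj z ∈ O) (hs : s ∈ O) (hc : conj c = -c)
    (hζ : c * ζ ∈ O) (hrhat : c * rhat = s * m₂) (hr : c * r = s * m₃) (hN : ∀ i j, N i j ∈ O)
    (j : Fin 4) : c * (vC ζ rhat r ᵥ* N) j ∈ O := by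
  have h : c * (vC ζ rhat r ᵥ* N) j = c * ζ * N 0 j + -conj (c * ζ) * N 1 j
      + s * m₂ * N 2 j + s * m₃ * N 3 j := by
    rw [vecMul_vC_apply, ← hrhat, ← hr, map_mul, hc]
    ring
  have hm (m : ℤ) (i : Fin 4) : s * m * N i j ∈ O := mul_mem (mul_mem hs (intCast_mem O m)) (hN i j)
  rw [h]
  exact add_mem (add_mem (add_mem (mul_mem hζ (hN 0 j))
    (mul_mem (neg_mem (hconj _ hζ)) (hN 1 j))) (hm m₂ 2)) (hm m₃ 3)

lemma exists_mul_vecMul_vC_eq_mul_intCast (hreal : ∀ z ∈ O, z.im = 0 → ∃ n : ℤ, z = n)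
    (hsub : ∀ z ∈ O, ∃ k : ℤ, z - conj z = s * k) (hc : conj c = -c)
    (hζ : c * ζ ∈ O) (hrhat : c * rhat = s * m₂) (hr : c * r = s * m₃) {j : Fin 4}
    (hN : ∀ i, N i j ∈ O) (hNconj : ∀ i, conj (N i j) = N (Equiv.swap 0 1 i) j) :
    ∃ m : ℤ, c * (vC ζ rhat r ᵥ* N) j = s * m := by
  obtain ⟨k, hk⟩ := hsub _ (mul_mem hζ (hN 0))
  obtain ⟨n₂, hn₂⟩ := hreal _ (hN 2) (conj_eq_iff_im.mp (hNconj 2))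
  obtain ⟨n₃, hn₃⟩ := hreal _ (hN 3) (conj_eq_iff_im.mp (hNconj 3))
  refine ⟨k + m₂ * n₂ + m₃ * n₃, ?_⟩
  rw [vecMul_vC_apply, show N 1 j = conj (N 0 j) from (hNconj 0).symm]
  simp only [map_mul, hc] at hk
  push_cast
  linear_combination hk + (c * rhat) * hn₂ + (c * r) * hn₃ + n₂ * hrhat + n₃ * hr

end Integrality

theorem stmt_1_general (K : Type*) [Field K] [NumberField K] (ι : K →+* ℂ)
    (hdeg : Module.finrank ℚ K = 2) (him : ∃ x : K, (ι x).im ≠ 0)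
    (hΔ : NumberField.discr K < 0)
    (D : ℝ) (α β γ δ : ℂ) (hdet : α * δ - β * γ = 1)
    (hN : ∀ i j : Fin 4, ∃ a : 𝓞 K, ι (a : K) = spin α β γ δ i j) :
    ∀ (ζ : ℂ) (rhat r : ℝ), MemSD K ι D ζ rhat r →
      let w := Matrix.vecMul (vC ζ rhat r) (spin α β γ δ)
      w 1 = conj (w 0) ∧ (w 2).im = 0 ∧ (w 3).im = 0 ∧
        Complex.normSq (w 0) - (w 2).re * (w 3).re = 1 ∧
        MemSD K ι D (w 0) (w 2).re (w 3).re := by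
  intro ζ rhat r ⟨hC, hζ, ⟨m₂, hm₂⟩, ⟨m₃, hm₃⟩⟩ w
  have : IsQuadraticExtension ℚ K := ⟨hdeg⟩
  obtain ⟨τ, hτ⟩ := exists_isConj ι
  have hτne : τ ≠ 1 := by
    rintro rfl
    obtain ⟨x, hx⟩ := him
    exact hx (conj_eq_iff_im.mp (hτ.eq x).symm)
  obtain ⟨hs, hsub⟩ := isqrt_abs_discr_mem hτ hτne hΔ
  have hconj := conj_vecMul_vC_spin α β γ δ ζ rhat r
  have hcirc : IsOrientedCircle (w 0) (w 2).re (w 3).re := isOrientedCircle_vecMul_spin hdet hC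
  have hradius (j : Fin 4) (hj : Equiv.swap 0 1 j = j) :
      ∃ m : ℤ, isqrt D * ((w j).re : ℂ) = isqrt |(discr K : ℝ)| * m := by
    rw [conj_eq_iff_re.mp ((hconj j).trans (congrArg w hj))]
    exact exists_mul_vecMul_vC_eq_mul_intCast
      (fun z hz => exists_intCast_eq_of_mem_ringOfIntegersImage hτ hτne hz) hsub (conj_isqrt D) hζ
      hm₂ hm₃ (fun i => hN i j) (fun i => (conj_spin α β γ δ i j).trans (by rw [hj]))
  refine ⟨(hconj 0).symm, conj_eq_iff_im.mp (hconj 2), conj_eq_iff_im.mp (hconj 3), hcirc, hcirc,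
    mul_vecMul_vC_mem (fun z => conj_mem_ringOfIntegersImage hτ) hs (conj_isqrt D) hζ hm₂ hm₃ hN 0,
    hradius 2 rfl, hradius 3 rfl⟩

theorem stmt_1 (K : Type*) [Field K] [NumberField K] (ι : K →+* ℂ)
    (hdeg : Module.finrank ℚ K = 2) (him : ∃ x : K, (ι x).im ≠ 0)
    (hΔ : NumberField.discr K < 0)
    (D : ℝ) (hD : 0 < D) (α β γ δ : ℂ) (hdet : α * δ - β * γ = 1)
    (hN : ∀ i j : Fin 4, ∃ a : 𝓞 K, ι (a : K) = spin α β γ δ i j) :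
    ∀ (ζ : ℂ) (rhat r : ℝ), MemSD K ι D ζ rhat r →
      let w := Matrix.vecMul (vC ζ rhat r) (spin α β γ δ)
      w 1 = conj (w 0) ∧ (w 2).im = 0 ∧ (w 3).im = 0 ∧
        Complex.normSq (w 0) - (w 2).re * (w 3).re = 1 ∧
        MemSD K ι D (w 0) (w 2).re (w 3).re :=
  stmt_1_general K ι hdeg him hΔ D α β γ δ hdet hN
end
end

section
/- Let D be a positive integer. For all oriented circles C = (ζ, r̂, r) and C' = (ζ', r̂', r') in S_D, the real number 2D·⟨v_C, v_C'⟩_Q = D·(ζ·conj(ζ') + conj(ζ)·ζ' − r̂·r' − r·r̂') is an integer, and it is an even integer whenever Δ is even. (Consequently, the angle between intersecting circles of S_D is arccos(n/2D) for some n ∈ ℤ, n even if Δ is even.) -/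
open Complex NumberField ComplexConjugate
open scoped nonZeroDivisors

noncomputable section

/-!
Write `ι a = i√D·ζ` and `ι a' = i√D·ζ'` with `a, a' ∈ 𝒪`. Since complex conjugation restricts to
the nontrivial automorphism of `K`, `D·(ζ ζ̄' + ζ̄ ζ') = ι a · conj (ι a') + conj (ι a) · ι a'` is
`Tr a · Tr a' - Tr (a a')`, and `D·r̂ r' = |Δ|·m m'` for the integers with `i√D·r̂ = √Δ·m`,
`i√D·r' = √Δ·m'`. If `Δ` is even then every `Tr a` is even: `Δ` divides
`disc (1, a) = 2 Tr (a²) - (Tr a)²`.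
-/

section

variable {K : Type*} [Field K] [NumberField K]

theorem discr_dvd_algebra_discr {ι : Type*} [Fintype ι] [DecidableEq ι]
    (hι : Fintype.card ι = Module.finrank ℚ K) (v : ι → 𝓞 K) :
    discr K ∣ Algebra.discr ℤ v := by
  have hcard : Fintype.card ι = Fintype.card (Module.Free.ChooseBasisIndex ℤ (𝓞 K)) := by
    rw [hι, ← RingOfIntegers.rank, Module.finrank_eq_card_chooseBasisIndex]
  let b := (RingOfIntegers.basis K).reindex (Fintype.equivOfCardEq hcard).symm
  rw [← b.toMatrix_map_vecMul v, Algebra.discr_of_matrix_vecMul, discr_eq_discr K b]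
  exact Dvd.intro_left _ rfl

theorem Algebra.discr_pair_one {R S : Type*} [CommRing R] [Nontrivial R] [CommRing S]
    [Algebra R S] [Module.Free R S] [Module.Finite R S] (h : Module.finrank R S = 2) (a : S) :
    Algebra.discr R ![1, a] = 2 * Algebra.trace R S (a * a) - Algebra.trace R S a ^ 2 := by
  have h1 : Algebra.trace R S 1 = 2 := by
    rw [← map_one (algebraMap R S), Algebra.trace_algebraMap, h]; norm_num
  simp [Algebra.discr_def, Matrix.det_fin_two, Algebra.traceMatrix_apply, h1, sq]

theorem two_dvd_trace_of_two_dvd_discr (hdeg : Module.finrank ℚ K = 2) (h2 : 2 ∣ discr K)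
    (a : 𝓞 K) :
    2 ∣ Algebra.trace ℤ (𝓞 K) a := by
  have hdisc := h2.trans (discr_dvd_algebra_discr (by simp [hdeg]) ![1, a])
  rw [Algebra.discr_pair_one (by rw [RingOfIntegers.rank, hdeg])] at hdisc
  have hsq : 2 ∣ Algebra.trace ℤ (𝓞 K) a ^ 2 := by
    simpa using (dvd_sub_right (dvd_mul_right 2 _)).mp hdisc
  exact Int.prime_two.dvd_of_dvd_pow hsq

theorem trace_int_eq_add_conj (ι : K →+* ℂ) (hdeg : Module.finrank ℚ K = 2)
    (him : ∃ x : K, (ι x).im ≠ 0) (a : 𝓞 K) :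
    (Algebra.trace ℤ (𝓞 K) a : ℂ) = ι a + conj (ι a) := by
  classical
  let σ : K →ₐ[ℚ] ℂ := ι.toRatAlgHom
  let τ : K →ₐ[ℚ] ℂ := ((starRingEnd ℂ).comp ι).toRatAlgHom
  have hστ : σ ≠ τ := by
    obtain ⟨y, hy⟩ := him
    intro h
    exact hy (conj_eq_iff_im.mp (DFunLike.congr_fun h y).symm)
  have huniv : (Finset.univ : Finset (K →ₐ[ℚ] ℂ)) = {σ, τ} := by
    refine (Finset.eq_of_subset_of_card_le (Finset.subset_univ _) ?_).symm
    rw [Finset.card_univ, AlgHom.card, hdeg, Finset.card_pair hστ]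
  have hsum := trace_eq_sum_embeddings (K := ℚ) (L := K) ℂ (x := (a : K))
  rw [huniv, Finset.sum_pair hστ, ← Algebra.coe_trace_int, eq_ratCast] at hsum
  exact_mod_cast hsum

theorem mul_conj_add_conj_mul_eq_trace (ι : K →+* ℂ) (hdeg : Module.finrank ℚ K = 2)
    (him : ∃ x : K, (ι x).im ≠ 0) (a b : 𝓞 K) :
    ι a * conj (ι b) + conj (ι a) * ι b =
      (Algebra.trace ℤ (𝓞 K) a * Algebra.trace ℤ (𝓞 K) b - Algebra.trace ℤ (𝓞 K) (a * b) : ℤ) := by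
  have hab := trace_int_eq_add_conj ι hdeg him (a * b)
  push_cast [map_mul] at hab ⊢
  rw [trace_int_eq_add_conj ι hdeg him, trace_int_eq_add_conj ι hdeg him, hab]
  ring

end

theorem isqrt_mul_self {t : ℝ} (ht : 0 ≤ t) : isqrt t * isqrt t = -t := by
  rw [isqrt, mul_mul_mul_comm, I_mul_I, ← ofReal_mul, Real.mul_self_sqrt ht]
  ring

theorem isqrt_mul_conj_add_conj_mul {t : ℝ} (ht : 0 ≤ t) (z w : ℂ) :
    isqrt t * z * conj (isqrt t * w) + conj (isqrt t * z) * (isqrt t * w) =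
      t * (z * conj w + conj z * w) := by
  have hconj : conj (isqrt t) = -isqrt t := by simp [isqrt]
  rw [map_mul, map_mul, hconj]
  linear_combination (-(z * conj w + conj z * w)) * isqrt_mul_self ht

theorem mul_mul_eq_of_isqrt_mul_eq {s t : ℝ} (hs : 0 ≤ s) (ht : 0 ≤ t) {x y m n : ℂ}
    (hx : isqrt s * x = isqrt t * m) (hy : isqrt s * y = isqrt t * n) :
    s * (x * y) = t * (m * n) := by
  linear_combination (-1 : ℂ) * (congrArg₂ (· * ·) hx hy) + (x * y) * isqrt_mul_self hs -
    (m * n) * isqrt_mul_self ht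

theorem stmt_2_general (K : Type*) [Field K] [NumberField K] (ι : K →+* ℂ)
    (hdeg : Module.finrank ℚ K = 2) (him : ∃ x : K, (ι x).im ≠ 0)
    (D : ℕ) (ζ : ℂ) (rhat r : ℝ) (ζ' : ℂ) (rhat' r' : ℝ)
    (hC : MemSD K ι D ζ rhat r) (hC' : MemSD K ι D ζ' rhat' r') :
    ∃ n : ℤ,
      (D : ℂ) * (ζ * conj ζ' + conj ζ * ζ' - (rhat : ℂ) * (r' : ℂ) - (r : ℂ) * (rhat' : ℂ)) =
        (n : ℂ) ∧
      (2 ∣ NumberField.discr K → 2 ∣ n) := by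
  obtain ⟨-, ⟨a, ha⟩, ⟨m₁, hm₁⟩, ⟨m₂, hm₂⟩⟩ := hC
  obtain ⟨-, ⟨a', ha'⟩, ⟨m₃, hm₃⟩, ⟨m₄, hm₄⟩⟩ := hC'
  let tr := Algebra.trace ℤ (𝓞 K)
  refine ⟨tr a * tr a' - tr (a * a') - |discr K| * (m₁ * m₄ + m₂ * m₃), ?_, fun h2 => ?_⟩
  · have hD : (0 : ℝ) ≤ D := D.cast_nonneg
    have hΔ : (0 : ℝ) ≤ |(discr K : ℝ)| := abs_nonneg _
    have hζ := mul_conj_add_conj_mul_eq_trace ι hdeg him a a'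
    rw [ha, ha', isqrt_mul_conj_add_conj_mul hD] at hζ
    have h₁₄ := mul_mul_eq_of_isqrt_mul_eq hD hΔ hm₁ hm₄
    have h₂₃ := mul_mul_eq_of_isqrt_mul_eq hD hΔ hm₂ hm₃
    rw [← Int.cast_abs, ofReal_intCast] at h₁₄ h₂₃
    push_cast at hζ ⊢
    linear_combination hζ - h₁₄ - h₂₃
  · have htr := two_dvd_trace_of_two_dvd_discr hdeg h2
    exact dvd_sub (dvd_sub ((htr a).mul_right _) (htr _)) (((dvd_abs _ _).mpr h2).mul_right _)

theorem stmt_2 (K : Type*) [Field K] [NumberField K] (ι : K →+* ℂ)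
    (hdeg : Module.finrank ℚ K = 2) (him : ∃ x : K, (ι x).im ≠ 0)
    (hΔ : NumberField.discr K < 0)
    (D : ℕ) (hD : 0 < D) (ζ : ℂ) (rhat r : ℝ) (ζ' : ℂ) (rhat' r' : ℝ)
    (hC : MemSD K ι D ζ rhat r) (hC' : MemSD K ι D ζ' rhat' r') :
    ∃ n : ℤ,
      (D : ℂ) * (ζ * conj ζ' + conj ζ * ζ' - (rhat : ℂ) * (r' : ℂ) - (r : ℂ) * (rhat' : ℂ)) =
        (n : ℂ) ∧
      (2 ∣ NumberField.discr K → 2 ∣ n) :=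
  stmt_2_general K ι hdeg him D ζ rhat r ζ' rhat' r' hC hC'
end
end

section
/- Let D be a positive integer. If there exist rational numbers x, y, w, not all zero, with D·x² + Δ·y² = w², then every circle C ∈ S_D with nonzero curvature contains a point of ι(K), i.e., there exists z ∈ ι(K) lying on C. -/
open Complex NumberField ComplexConjugate
open scoped nonZeroDivisors

noncomputable section

/-!
A quadratic field is Galois, so its discriminant is a square in `K`; as `Δ < 0`, this gives
`δ ∈ K` with `ι δ = √Δ`. A nonzero rational point `(x, y, w)` of `D x² + Δ y² = w²` has `x ≠ 0`,
and `β = (w + y δ) / x` satisfies `|ι β|² = D`. If `i√D ζ = ι a` and `i√D r = √Δ m`, then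
`z = ι ((β + a) / (m δ))` satisfies `r z - ζ = ι β / (i√D)`, a number of absolute value `1`,
and `|r z - ζ| = 1` is the equation of `C` because `|ζ|² - r̂ r = 1`.
-/

theorem Algebra.exists_sq_eq_discr_of_normal {F L : Type*} [Field F] [Field L] [Algebra F L]
    [FiniteDimensional F L] [Algebra.IsSeparable F L] [Normal F L]
    {ι : Type*} [Fintype ι] [DecidableEq ι] (b : Module.Basis ι F L) :
    ∃ d : L, d ^ 2 = algebraMap F L (Algebra.discr F b) := by
  let E := AlgebraicClosure L
  let e : ι ≃ (L →ₐ[F] E) :=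
    Fintype.equivOfCardEq (by rw [AlgHom.card, Module.finrank_eq_card_basis b])
  -- every embedding of a normal extension factors through an automorphism of `L`
  let N : Matrix ι ι L := Matrix.of fun i j => (e j).restrictNormal L (b i)
  have hN : Algebra.embeddingsMatrixReindex F E b e = N.map (algebraMap L E) := by
    ext i j
    simp [N, Algebra.embeddingsMatrixReindex, Algebra.embeddingsMatrix]
  refine ⟨N.det, (algebraMap L E).injective ?_⟩
  rw [map_pow, RingHom.map_det, RingHom.mapMatrix_apply, ← hN,
    ← Algebra.discr_eq_det_embeddingsMatrixReindex_pow_two, ← IsScalarTower.algebraMap_apply]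

theorem NumberField.exists_sq_eq_discr_of_finrank_eq_two (K : Type*) [Field K] [NumberField K]
    (hdeg : Module.finrank ℚ K = 2) : ∃ d : K, d ^ 2 = (discr K : K) := by
  have : Algebra.IsQuadraticExtension ℚ K := { finrank_eq_two' := hdeg }
  obtain ⟨d, hd⟩ := Algebra.exists_sq_eq_discr_of_normal (integralBasis K)
  exact ⟨d, by rw [hd, ← coe_discr, eq_ratCast, Rat.cast_intCast]⟩

lemma isqrt_sq {t : ℝ} (ht : 0 ≤ t) : isqrt t ^ 2 = -t := by
  rw [isqrt, mul_pow, I_sq, ← ofReal_pow, Real.sq_sqrt ht, neg_one_mul]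

lemma eq_isqrt_or_eq_neg_of_sq_eq {z : ℂ} {t : ℝ} (ht : t ≤ 0) (h : z ^ 2 = t) :
    z = isqrt |t| ∨ z = -isqrt |t| := by
  rw [← sq_eq_sq_iff_eq_or_eq_neg, h, isqrt_sq (abs_nonneg t), abs_of_nonpos ht, ofReal_neg,
    neg_neg]

theorem exists_map_eq_isqrt_discr (K : Type*) [Field K] [NumberField K] (ι : K →+* ℂ)
    (hdeg : Module.finrank ℚ K = 2) (hΔ : discr K < 0) :
    ∃ δ : K, ι δ = isqrt |(discr K : ℝ)| := by
  obtain ⟨d, hd⟩ := NumberField.exists_sq_eq_discr_of_finrank_eq_two K hdeg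
  have hιd : ι d ^ 2 = ((discr K : ℝ) : ℂ) := by rw [← map_pow, hd]; simp
  rcases eq_isqrt_or_eq_neg_of_sq_eq (by exact_mod_cast hΔ.le) hιd with h | h
  · exact ⟨d, h⟩
  · exact ⟨-d, by rw [map_neg, h, neg_neg]⟩

lemma normSq_map_ratCast_add_mul {K : Type*} [Field K] (ι : K →+* ℂ) {n : ℤ} (hn : n < 0)
    {δ : K} (hδ : ι δ = isqrt |(n : ℝ)|) (a b : ℚ) :
    normSq (ι (a + b * δ)) = a ^ 2 - n * b ^ 2 := by
  have hn' : (n : ℝ) < 0 := by exact_mod_cast hn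
  rw [map_add, map_mul, map_ratCast, map_ratCast, hδ, isqrt, abs_of_neg hn']
  simp only [normSq_apply, ← ofReal_ratCast, mul_re, mul_im, add_re, add_im, ofReal_re,
    ofReal_im, I_re, I_im]
  linear_combination (b : ℝ) ^ 2 * Real.mul_self_sqrt (neg_nonneg.mpr hn'.le)

theorem exists_normSq_map_eq_of_conic {K : Type*} [Field K] (ι : K →+* ℂ) {n : ℤ} (hn : n < 0)
    {δ : K} (hδ : ι δ = isqrt |(n : ℝ)|) {d : ℚ}
    (h : ∃ x y w : ℚ, ¬(x = 0 ∧ y = 0 ∧ w = 0) ∧ d * x ^ 2 + n * y ^ 2 = w ^ 2) :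
    ∃ β : K, normSq (ι β) = d := by
  obtain ⟨x, y, w, hnz, hxyw⟩ := h
  have hx : x ≠ 0 := by
    rintro rfl
    have hn' : (n : ℚ) < 0 := by exact_mod_cast hn
    have hw : w ^ 2 = 0 := by nlinarith [sq_nonneg y, sq_nonneg w]
    have hy : y ^ 2 = 0 := by
      rw [hw, zero_pow two_ne_zero, mul_zero, zero_add, mul_eq_zero] at hxyw
      exact hxyw.resolve_left hn'.ne
    exact hnz ⟨rfl, pow_eq_zero_iff two_ne_zero |>.mp hy, pow_eq_zero_iff two_ne_zero |>.mp hw⟩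
  refine ⟨(w / x : ℚ) + (y / x : ℚ) * δ, ?_⟩
  rw [normSq_map_ratCast_add_mul ι hn hδ]
  have : (d : ℝ) * x ^ 2 + n * y ^ 2 = w ^ 2 := by exact_mod_cast hxyw
  push_cast
  field_simp
  linarith

lemma liesOn_of_normSq_mul_sub_eq_one {z ζ : ℂ} {rhat r : ℝ} (hC : IsOrientedCircle ζ rhat r)
    (hr : r ≠ 0) (h : normSq (r * z - ζ) = 1) : LiesOn z ζ rhat r := by
  have hexp : normSq (r * z - ζ) = r ^ 2 * normSq z - 2 * r * (conj z * ζ).re + normSq ζ := by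
    simp only [normSq_apply, mul_re, mul_im, sub_re, sub_im, conj_re, conj_im, ofReal_re,
      ofReal_im]
    ring
  refine (mul_eq_zero.mp ?_).resolve_left hr
  rw [IsOrientedCircle] at hC
  linear_combination -(h.symm.trans hexp) - hC

lemma normSq_mul_div_sub_eq_one {w b ζ : ℂ} {r : ℝ} (hw : w ≠ 0) (hr : r ≠ 0)
    (hb : normSq b = normSq w) : normSq (r * ((b + w * ζ) / (w * r)) - ζ) = 1 := by
  have hr' : (r : ℂ) ≠ 0 := ofReal_ne_zero.mpr hr
  have : (r : ℂ) * ((b + w * ζ) / (w * r)) - ζ = b / w := by field_simp; ring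
  rw [this, normSq_div, hb, div_self (normSq_eq_zero.not.mpr hw)]

theorem stmt_5_general (K : Type*) [Field K] [NumberField K] (ι : K →+* ℂ)
    (hdeg : Module.finrank ℚ K = 2)
    (hΔ : NumberField.discr K < 0)
    (D : ℕ) (hD : 0 < D)
    (h : ∃ x y w : ℚ, ¬(x = 0 ∧ y = 0 ∧ w = 0) ∧
      (D : ℚ) * x ^ 2 + (NumberField.discr K : ℚ) * y ^ 2 = w ^ 2)
    (ζ : ℂ) (rhat r : ℝ) (hC : MemSD K ι D ζ rhat r) (hr : r ≠ 0) :
    ∃ α : K, LiesOn (ι α) ζ rhat r := by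
  obtain ⟨horient, ⟨a, ha⟩, -, ⟨m, hm⟩⟩ := hC
  obtain ⟨δ, hδ⟩ := exists_map_eq_isqrt_discr K ι hdeg hΔ
  obtain ⟨β, hβ⟩ := exists_normSq_map_eq_of_conic ι hΔ hδ h
  have hD' : (0 : ℝ) < D := by exact_mod_cast hD
  have hw : isqrt D ≠ 0 := by rw [← normSq_pos, normSq_isqrt hD'.le]; exact hD'
  have hmδ : ι (m * δ) = isqrt D * r := by rw [map_mul, map_intCast, hδ, mul_comm, hm]
  refine ⟨(β + a) / (m * δ), liesOn_of_normSq_mul_sub_eq_one horient hr ?_⟩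
  rw [map_div₀, map_add, hmδ, ha]
  exact normSq_mul_div_sub_eq_one hw hr (by rw [hβ, normSq_isqrt hD'.le, Rat.cast_natCast])

theorem stmt_5 (K : Type*) [Field K] [NumberField K] (ι : K →+* ℂ)
    (hdeg : Module.finrank ℚ K = 2) (him : ∃ x : K, (ι x).im ≠ 0)
    (hΔ : NumberField.discr K < 0)
    (D : ℕ) (hD : 0 < D)
    (h : ∃ x y w : ℚ, ¬(x = 0 ∧ y = 0 ∧ w = 0) ∧
      (D : ℚ) * x ^ 2 + (NumberField.discr K : ℚ) * y ^ 2 = w ^ 2)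
    (ζ : ℂ) (rhat r : ℝ) (hC : MemSD K ι D ζ rhat r) (hr : r ≠ 0) :
    ∃ α : K, LiesOn (ι α) ζ rhat r :=
  stmt_5_general K ι hdeg hΔ D hD h ζ rhat r hC hr
end
end

section
/- Let M = [[α, γ], [β, δ]] be a 2×2 matrix with entries in K and det M = αδ − βγ ≠ 0. Then for all λ, μ ∈ K not both zero, one has the containments of fractional ideals (λ, μ)·(det M)·(M)⁻¹ ⊆ (αλ + γμ, βλ + δμ) ⊆ (λ, μ)·(M). Moreover, if N is a 2×2 matrix with entries in the ring of integers 𝒪 and determinant 1, then (M·N) = (M) = (N·M). -/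
open Complex NumberField ComplexConjugate
open scoped nonZeroDivisors

noncomputable section

/-! Cramer's rule writes `(det M)·λ` and `(det M)·μ` as combinations of the entries of `M v`
with coefficients among the entries of `M`, which gives `(λ, μ)·(det M) ⊆ (M v)·(M)`; dividing by
`(M)` gives the first containment (if `(M) = 0`, then `(M)⁻¹ = 0` and its left side vanishes).
For the second part, the entries of `M N` and `N M` are `𝒪`-combinations of those of `M`, and
`N⁻¹` is again integral when `det N = 1`. -/

namespace FractionalIdeal

variable {R P : Type*} [CommRing R] {S : Submonoid R} [CommRing P] [Algebra R P]

instance instAddSubgroupClass : AddSubgroupClass (FractionalIdeal S P) P where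
  add_mem hx hy := (Submodule.add_mem _ hx hy :)
  zero_mem I := (I : Submodule R P).zero_mem
  neg_mem hx := (Submodule.neg_mem _ hx :)

theorem algebraMap_mul_add_mul_mem {I : FractionalIdeal S P} {x y : P} (r s : R)
    (hx : x ∈ I) (hy : y ∈ I) : algebraMap R P r * x + algebraMap R P s * y ∈ I := by
  simp only [← Algebra.smul_def]
  exact (Submodule.add_mem _ (Submodule.smul_mem _ r hx) (Submodule.smul_mem _ s hy) :)

end FractionalIdeal

section
variable {K : Type*} [Field K]

theorem mul_coe_add_mul_coe_mem {I : FractionalIdeal (𝓞 K)⁰ K} {x y : K} (r s : 𝓞 K)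
    (hx : x ∈ I) (hy : y ∈ I) : x * r + y * s ∈ I := by
  rw [mul_comm x, mul_comm y]
  exact FractionalIdeal.algebraMap_mul_add_mul_mem r s hx hy

variable [NumberField K]

theorem gen2_le_iff {x y : K} {I : FractionalIdeal (𝓞 K)⁰ K} :
    gen2 K x y ≤ I ↔ x ∈ I ∧ y ∈ I := by
  simp only [gen2, ← FractionalIdeal.sup_eq_add, sup_le_iff,
    FractionalIdeal.spanSingleton_le_iff_mem]

theorem gen4_le_iff {x y z w : K} {I : FractionalIdeal (𝓞 K)⁰ K} :
    gen4 K x y z w ≤ I ↔ x ∈ I ∧ y ∈ I ∧ z ∈ I ∧ w ∈ I := by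
  simp only [gen4, ← FractionalIdeal.sup_eq_add, sup_le_iff,
    FractionalIdeal.spanSingleton_le_iff_mem, and_assoc]

theorem gen2_mul_spanSingleton (x y z : K) :
    gen2 K x y * FractionalIdeal.spanSingleton (𝓞 K)⁰ z = gen2 K (x * z) (y * z) := by
  simp only [gen2, add_mul, FractionalIdeal.spanSingleton_mul_spanSingleton]

theorem gen2_mulVec_le_mul_gen4 (a c b d lam mu : K) :
    gen2 K (a * lam + c * mu) (b * lam + d * mu) ≤ gen2 K lam mu * gen4 K a c b d := by
  obtain ⟨hlam, hmu⟩ := gen2_le_iff.mp (le_refl (gen2 K lam mu))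
  obtain ⟨ha, hc, hb, hd⟩ := gen4_le_iff.mp (le_refl (gen4 K a c b d))
  rw [mul_comm (gen2 K lam mu), gen2_le_iff]
  exact ⟨add_mem (FractionalIdeal.mul_mem_mul ha hlam) (FractionalIdeal.mul_mem_mul hc hmu),
    add_mem (FractionalIdeal.mul_mem_mul hb hlam) (FractionalIdeal.mul_mem_mul hd hmu)⟩

theorem gen2_mul_spanSingleton_det_le (a c b d lam mu : K) :
    gen2 K lam mu * FractionalIdeal.spanSingleton (𝓞 K)⁰ (a * d - b * c) ≤
      gen2 K (a * lam + c * mu) (b * lam + d * mu) * gen4 K a c b d := by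
  set X := a * lam + c * mu
  set Y := b * lam + d * mu
  obtain ⟨hX, hY⟩ := gen2_le_iff.mp (le_refl (gen2 K X Y))
  obtain ⟨ha, hc, hb, hd⟩ := gen4_le_iff.mp (le_refl (gen4 K a c b d))
  have hlam : lam * (a * d - b * c) = X * d - Y * c := by ring
  have hmu : mu * (a * d - b * c) = Y * a - X * b := by ring
  rw [gen2_mul_spanSingleton, gen2_le_iff, hlam, hmu]
  exact ⟨sub_mem (FractionalIdeal.mul_mem_mul hX hd) (FractionalIdeal.mul_mem_mul hY hc),
    sub_mem (FractionalIdeal.mul_mem_mul hY ha) (FractionalIdeal.mul_mem_mul hX hb)⟩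

theorem gen4_mul_integral_le (a c b d : K) (e g f h : 𝓞 K) :
    gen4 K (a * e + c * f) (a * g + c * h) (b * e + d * f) (b * g + d * h) ≤ gen4 K a c b d := by
  obtain ⟨ha, hc, hb, hd⟩ := gen4_le_iff.mp (le_refl (gen4 K a c b d))
  exact gen4_le_iff.mpr ⟨mul_coe_add_mul_coe_mem e f ha hc, mul_coe_add_mul_coe_mem g h ha hc,
    mul_coe_add_mul_coe_mem e f hb hd, mul_coe_add_mul_coe_mem g h hb hd⟩

theorem gen4_integral_mul_le (a c b d : K) (e g f h : 𝓞 K) :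
    gen4 K (e * a + g * b) (e * c + g * d) (f * a + h * b) (f * c + h * d) ≤ gen4 K a c b d := by
  obtain ⟨ha, hc, hb, hd⟩ := gen4_le_iff.mp (le_refl (gen4 K a c b d))
  exact gen4_le_iff.mpr ⟨FractionalIdeal.algebraMap_mul_add_mul_mem e g ha hb,
    FractionalIdeal.algebraMap_mul_add_mul_mem e g hc hd,
    FractionalIdeal.algebraMap_mul_add_mul_mem f h ha hb,
    FractionalIdeal.algebraMap_mul_add_mul_mem f h hc hd⟩

theorem gen4_mul_integral_eq (a c b d : K) {e g f h : 𝓞 K} (hN : e * h - f * g = 1) :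
    gen4 K (a * e + c * f) (a * g + c * h) (b * e + d * f) (b * g + d * h) = gen4 K a c b d := by
  have hN' : (e : K) * h - f * g = 1 := by exact_mod_cast congrArg ((↑) : 𝓞 K → K) hN
  refine (gen4_mul_integral_le a c b d e g f h).antisymm ?_
  -- `M = (M N) N⁻¹` with `N⁻¹ = [[h, -g], [-f, e]]`
  convert gen4_mul_integral_le (a * e + c * f) (a * g + c * h) (b * e + d * f) (b * g + d * h)
    h (-g) (-f) e using 2 <;> push_cast
  · linear_combination -a * hN'
  · linear_combination -c * hN'
  · linear_combination -b * hN'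
  · linear_combination -d * hN'

theorem gen4_integral_mul_eq (a c b d : K) {e g f h : 𝓞 K} (hN : e * h - f * g = 1) :
    gen4 K (e * a + g * b) (e * c + g * d) (f * a + h * b) (f * c + h * d) = gen4 K a c b d := by
  have hN' : (e : K) * h - f * g = 1 := by exact_mod_cast congrArg ((↑) : 𝓞 K → K) hN
  refine (gen4_integral_mul_le a c b d e g f h).antisymm ?_
  convert gen4_integral_mul_le (e * a + g * b) (e * c + g * d) (f * a + h * b) (f * c + h * d)
    h (-g) (-f) e using 2 <;> push_cast
  · linear_combination -a * hN'
  · linear_combination -c * hN'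
  · linear_combination -b * hN'
  · linear_combination -d * hN'

end

theorem stmt_6_general (K : Type*) [Field K] [NumberField K]
    (a c b d : K) :
    (∀ lam mu : K, ¬(lam = 0 ∧ mu = 0) →
      gen2 K lam mu * FractionalIdeal.spanSingleton (𝓞 K)⁰ (a * d - b * c) *
          (gen4 K a c b d)⁻¹ ≤
        gen2 K (a * lam + c * mu) (b * lam + d * mu) ∧
      gen2 K (a * lam + c * mu) (b * lam + d * mu) ≤ gen2 K lam mu * gen4 K a c b d) ∧
    (∀ e g f h : 𝓞 K, e * h - f * g = 1 →
      gen4 K (a * (e : K) + c * (f : K)) (a * (g : K) + c * (h : K))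
          (b * (e : K) + d * (f : K)) (b * (g : K) + d * (h : K)) = gen4 K a c b d ∧
      gen4 K ((e : K) * a + (g : K) * b) ((e : K) * c + (g : K) * d)
          ((f : K) * a + (h : K) * b) ((f : K) * c + (h : K) * d) = gen4 K a c b d) := by
  refine ⟨fun lam mu _ => ⟨?_, gen2_mulVec_le_mul_gen4 a c b d lam mu⟩, fun e g f h hN =>
    ⟨gen4_mul_integral_eq a c b d hN, gen4_integral_mul_eq a c b d hN⟩⟩
  exact mul_inv_le_of_le_mul₀ zero_le zero_le (gen2_mul_spanSingleton_det_le a c b d lam mu)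

theorem stmt_6 (K : Type*) [Field K] [NumberField K]
    (hdeg : Module.finrank ℚ K = 2) (him : IsEmpty (K →+* ℝ))
    (a c b d : K) (hdet : a * d - b * c ≠ 0) :
    (∀ lam mu : K, ¬(lam = 0 ∧ mu = 0) →
      gen2 K lam mu * FractionalIdeal.spanSingleton (𝓞 K)⁰ (a * d - b * c) *
          (gen4 K a c b d)⁻¹ ≤
        gen2 K (a * lam + c * mu) (b * lam + d * mu) ∧
      gen2 K (a * lam + c * mu) (b * lam + d * mu) ≤ gen2 K lam mu * gen4 K a c b d) ∧
    (∀ e g f h : 𝓞 K, e * h - f * g = 1 →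
      gen4 K (a * (e : K) + c * (f : K)) (a * (g : K) + c * (h : K))
          (b * (e : K) + d * (f : K)) (b * (g : K) + d * (h : K)) = gen4 K a c b d ∧
      gen4 K ((e : K) * a + (g : K) * b) ((e : K) * c + (g : K) * d)
          ((f : K) * a + (h : K) * b) ((f : K) * c + (h : K) * d) = gen4 K a c b d) :=
  stmt_6_general K a c b d
end
end

section
/- Let D be a positive integer and let K = ℚ(√−D) (so ι(K) ⊆ ℂ contains i√D). Define the row vectors v₁ = [−1, −1, 0, 0], v₂ = [1, 1, 2, 0], v₃ = [1, 1, 0, 2], v₄ = [1 + 2i√D, 1 − 2i√D, 2D, 2]. Then for any integers a₁, a₂, a₃, a₄, writing a₁v₁ + a₂v₂ + a₃v₃ + a₄v₄ = [ζ, conj(ζ), r̂, r], if |ζ|² − r̂·r = 1 then the oriented circle (ζ, r̂, r) belongs to S_D for K. In particular the four circles with vectors v₁, v₂, v₃, v₄ (which satisfy |ζ|² − r̂·r = 1) belong to S_D, so the Baragar–Lautzenheiser packing of parameter D is contained in S_D. -/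
open Complex NumberField ComplexConjugate
open scoped nonZeroDivisors

noncomputable section

/-!
Every lattice point has `ζ ∈ ℤ + 2i√D·ℤ` and `r̂, r ∈ 2ℤ`. The element `s = ι⁻¹(i√D)` satisfies
`s² = -D`, so it is an algebraic integer and `i√D·ζ` lies in `ℤ[s] ⊆ 𝒪`. The order `ℤ[s]` has
discriminant `-4D`, which is `k²·Δ` for the integer `k = det` of the change of basis to an integral
basis of `𝒪`; hence `2√D = |k|·√|Δ|`, and `i√D·2t = √Δ·(|k|t)`.
-/

theorem I_mul_sqrt_natCast_mul_self (D : ℕ) : (I * √(D : ℝ)) * (I * √(D : ℝ)) = -D := by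
  have hD : (√(D : ℝ) : ℂ) * √(D : ℝ) = D := by
    rw [← ofReal_mul, Real.mul_self_sqrt D.cast_nonneg, ofReal_natCast]
  linear_combination (√(D : ℝ) : ℂ) ^ 2 * I_mul_I - hD

theorem mul_self_eq_of_map_eq_I_mul_sqrt {F : Type*} [Field F] (ι : F →+* ℂ) {D : ℕ} {s : F}
    (hs : ι s = I * √(D : ℝ)) : s * s = ((-D : ℤ) : F) := ι.injective <| by
  rw [map_mul, hs, I_mul_sqrt_natCast_mul_self, map_intCast]
  push_cast
  rfl

theorem exists_ringOfIntegers_map_eq_I_mul_sqrt {F : Type*} [Field F] (ι : F →+* ℂ) {D : ℕ}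
    {s : F} (hs : ι s = I * √(D : ℝ)) : ∃ σ : 𝓞 F, ι σ = I * √(D : ℝ) :=
  ⟨⟨s, IsIntegral.of_pow two_pos <| by
    rw [sq, mul_self_eq_of_map_eq_I_mul_sqrt ι hs]; exact isIntegral_algebraMap⟩, hs⟩

theorem isqrt_mul_two_mul_intCast {a b : ℝ} {k : ℤ} (hk : k * √a = 2 * √b) (t : ℤ) :
    isqrt b * ((2 * t : ℝ) : ℂ) = isqrt a * ((k * t : ℤ) : ℂ) := by
  have hkC : (k : ℂ) * (√a : ℂ) = 2 * (√b : ℂ) := by exact_mod_cast congrArg ofReal hk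
  unfold isqrt
  push_cast
  linear_combination -(I * t) * hkC

namespace NumberField

variable {K : Type*} [Field K] [NumberField K]

theorem exists_discr_eq_sq_mul_discr {n : ℕ} (hn : Module.finrank ℚ K = n) {c : Fin n → K}
    (hc : ∀ i, IsIntegral ℤ (c i)) : ∃ k : ℤ, Algebra.discr ℚ c = k ^ 2 * discr K := by
  have hcard : Fintype.card (Module.Free.ChooseBasisIndex ℤ (𝓞 K)) = n := by
    rw [← Module.finrank_eq_card_chooseBasisIndex, RingOfIntegers.rank, hn]
  set b : Module.Basis (Fin n) ℚ K := (integralBasis K).reindex (Fintype.equivFinOfCardEq hcard)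
  have hb : Algebra.discr ℚ b = discr K := by
    rw [Module.Basis.coe_reindex, Algebra.discr_reindex, coe_discr]
  have hint : IsIntegral ℤ (b.toMatrix c).det := IsIntegral.det fun i j => by
    obtain ⟨x, hx⟩ : ∃ x : 𝓞 K, c j = algebraMap (𝓞 K) K x := ⟨⟨c j, hc j⟩, rfl⟩
    rw [Module.Basis.toMatrix_apply, Module.Basis.repr_reindex_apply, hx,
      integralBasis_repr_apply]
    exact isIntegral_algebraMap
  obtain ⟨k, hk⟩ := IsIntegrallyClosed.isIntegral_iff.1 hint
  refine ⟨k, ?_⟩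
  rw [← b.toMatrix_map_vecMul c, Algebra.discr_of_matrix_vecMul, hb, ← hk, eq_intCast]

theorem trace_eq_zero_of_mul_self_eq_algebraMap (hdeg : Module.finrank ℚ K = 2) {s : K} {d : ℚ}
    (hsd : s * s = algebraMap ℚ K d) (hirr : s ∉ Set.range (algebraMap ℚ K)) :
    Algebra.trace ℚ K s = 0 := by
  have li : LinearIndependent ℚ ![(1 : K), s] := by
    refine LinearIndependent.pair_iff.2 fun a b hab => ?_
    rw [Algebra.smul_def, mul_one, Algebra.smul_def] at hab
    by_cases hb : b = 0
    · subst hb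
      simpa using hab
    · refine absurd ⟨-a / b, ?_⟩ hirr
      have hbK : algebraMap ℚ K b ≠ 0 := by simpa using hb
      rw [map_div₀, map_neg, div_eq_iff hbK]
      linear_combination -hab
  let c : Module.Basis (Fin 2) ℚ K := basisOfLinearIndependentOfCardEqFinrank li (by simp [hdeg])
  have hc : ⇑c = ![(1 : K), s] := coe_basisOfLinearIndependentOfCardEqFinrank _ _
  have hs : c.repr s 0 = 0 := by
    rw [show s = c 1 by simp [hc], c.repr_self]; simp
  have hss : c.repr (s * s) 1 = 0 := by
    rw [hsd, ← mul_one (algebraMap ℚ K d), ← Algebra.smul_def, show (1 : K) = c 0 by simp [hc],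
      map_smul, c.repr_self]; simp
  rw [Algebra.trace_eq_matrix_trace c, Matrix.trace_fin_two, Algebra.leftMulMatrix_eq_repr_mul,
    Algebra.leftMulMatrix_eq_repr_mul, hc]
  simp only [Matrix.cons_val_zero, Matrix.cons_val_one, mul_one, hs, hss, add_zero]

theorem discr_one_mul_self_eq_algebraMap (hdeg : Module.finrank ℚ K = 2) {s : K} {d : ℚ}
    (hsd : s * s = algebraMap ℚ K d) (hirr : s ∉ Set.range (algebraMap ℚ K)) :
    Algebra.discr ℚ ![(1 : K), s] = 4 * d := by
  have htr : ∀ x : ℚ, Algebra.trace ℚ K (algebraMap ℚ K x) = 2 * x := fun x => by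
    rw [Algebra.trace_algebraMap, hdeg, nsmul_eq_mul, Nat.cast_ofNat]
  rw [Algebra.discr_def, Matrix.det_fin_two]
  simp only [Algebra.traceMatrix_apply, Algebra.traceForm_apply, Matrix.cons_val_zero,
    Matrix.cons_val_one, one_mul, mul_one, hsd,
    trace_eq_zero_of_mul_self_eq_algebraMap hdeg hsd hirr]
  rw [← map_one (algebraMap ℚ K), htr, htr]
  ring

theorem exists_int_sq_mul_discr_eq_of_mul_self_eq (hdeg : Module.finrank ℚ K = 2) {s : K}
    (hs : IsIntegral ℤ s) {d : ℤ} (hsd : s * s = d) (hirr : s ∉ Set.range (algebraMap ℚ K)) :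
    ∃ k : ℤ, (k : ℚ) ^ 2 * discr K = 4 * d := by
  obtain ⟨k, hk⟩ := exists_discr_eq_sq_mul_discr hdeg (c := ![1, s])
    (Fin.forall_fin_two.2 ⟨isIntegral_one, hs⟩)
  refine ⟨k, ?_⟩
  rw [← hk, discr_one_mul_self_eq_algebraMap hdeg (d := d) (by simpa using hsd) hirr]

theorem exists_int_mul_sqrt_abs_discr_eq (ι : K →+* ℂ) (hdeg : Module.finrank ℚ K = 2) {D : ℕ}
    (hD : 0 < D) {σ : 𝓞 K} (hσ : ι σ = I * √(D : ℝ)) :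
    ∃ k : ℤ, (k : ℝ) * √|(discr K : ℝ)| = 2 * √(D : ℝ) := by
  have hirr : (σ : K) ∉ Set.range (algebraMap ℚ K) := by
    rintro ⟨q, hq⟩
    have h := congrArg im hσ
    rw [← hq, ← RingHom.comp_apply, eq_ratCast] at h
    simp only [ratCast_im, mul_im, I_re, I_im, ofReal_re, ofReal_im] at h
    exact (Real.sqrt_pos.2 (Nat.cast_pos.2 hD)).ne' (by linarith)
  obtain ⟨k, hk⟩ := exists_int_sq_mul_discr_eq_of_mul_self_eq hdeg σ.isIntegral_coe
    (mul_self_eq_of_map_eq_I_mul_sqrt ι hσ) hirr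
  have hkR : (k : ℝ) ^ 2 * |(discr K : ℝ)| = 4 * D := by
    have := congrArg (fun x : ℚ => |(x : ℝ)|) hk
    push_cast at this
    rwa [abs_mul, abs_mul, abs_of_nonneg (sq_nonneg _), abs_of_nonneg (zero_le_four : (0 : ℝ) ≤ 4),
      abs_neg, Nat.abs_cast] at this
  refine ⟨|k|, ?_⟩
  rw [Int.cast_abs, ← Real.sqrt_sq_eq_abs, ← Real.sqrt_mul (sq_nonneg _), hkR,
    Real.sqrt_mul zero_le_four, show (4 : ℝ) = 2 ^ 2 by norm_num, Real.sqrt_sq zero_le_two]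

theorem exists_ringOfIntegers_eq_isqrt_mul (ι : K →+* ℂ) {D : ℕ} {σ : 𝓞 K}
    (hσ : ι σ = I * √(D : ℝ)) (p q : ℤ) :
    ∃ a : 𝓞 K, ι a = isqrt D * (p + q * (2 * I * √(D : ℝ))) := by
  refine ⟨p * σ - (2 * q * D : ℤ), ?_⟩
  push_cast
  simp only [map_sub, map_mul, map_intCast, map_natCast, map_ofNat, hσ, isqrt]
  linear_combination -2 * (q : ℂ) * I_mul_sqrt_natCast_mul_self D

end NumberField

theorem memSD_of_isOrientedCircle {K : Type*} [Field K] [NumberField K] (ι : K →+* ℂ) {D : ℕ}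
    {σ : 𝓞 K} (hσ : ι σ = I * √(D : ℝ)) {k : ℤ} (hk : k * √|(discr K : ℝ)| = 2 * √(D : ℝ))
    (p q t u : ℤ) {ζ : ℂ} {rhat r : ℝ} (hζ : ζ = p + q * (2 * I * √(D : ℝ)))
    (hrhat : rhat = 2 * t) (hr : r = 2 * u) (hcirc : IsOrientedCircle ζ rhat r) :
    MemSD K ι D ζ rhat r := by
  subst hζ hrhat hr
  exact ⟨hcirc, exists_ringOfIntegers_eq_isqrt_mul ι hσ p q, ⟨_, isqrt_mul_two_mul_intCast hk t⟩,
    ⟨_, isqrt_mul_two_mul_intCast hk u⟩⟩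

theorem stmt_9_general (K : Type*) [Field K] [NumberField K] (ι : K →+* ℂ)
    (hdeg : Module.finrank ℚ K = 2)
    (D : ℕ) (hD : 0 < D) (hs : ∃ s : K, ι s = Complex.I * Real.sqrt D) :
    (∀ a₁ a₂ a₃ a₄ : ℤ,
      IsOrientedCircle
        ((a₁ : ℂ) * (-1) + (a₂ : ℂ) * 1 + (a₃ : ℂ) * 1 +
          (a₄ : ℂ) * (1 + 2 * Complex.I * Real.sqrt D))
        ((a₂ : ℝ) * 2 + (a₄ : ℝ) * (2 * D)) ((a₃ : ℝ) * 2 + (a₄ : ℝ) * 2) →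
      MemSD K ι D
        ((a₁ : ℂ) * (-1) + (a₂ : ℂ) * 1 + (a₃ : ℂ) * 1 +
          (a₄ : ℂ) * (1 + 2 * Complex.I * Real.sqrt D))
        ((a₂ : ℝ) * 2 + (a₄ : ℝ) * (2 * D)) ((a₃ : ℝ) * 2 + (a₄ : ℝ) * 2)) ∧
    MemSD K ι D (-1) 0 0 ∧ MemSD K ι D 1 2 0 ∧ MemSD K ι D 1 0 2 ∧
    MemSD K ι D (1 + 2 * Complex.I * Real.sqrt D) (2 * D) 2 := by
  obtain ⟨s, hs⟩ := hs
  obtain ⟨σ, hσ⟩ := exists_ringOfIntegers_map_eq_I_mul_sqrt ι hs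
  obtain ⟨k, hk⟩ := exists_int_mul_sqrt_abs_discr_eq ι hdeg hD hσ
  have mem := memSD_of_isOrientedCircle ι hσ hk
  have hv₄ : IsOrientedCircle (1 + 2 * I * √(D : ℝ)) (2 * D) 2 := by
    simp only [IsOrientedCircle, normSq_apply, add_re, add_im, mul_re, mul_im, I_re, I_im,
      ofReal_re, ofReal_im, one_re, one_im, re_ofNat, im_ofNat]
    nlinarith [Real.mul_self_sqrt D.cast_nonneg]
  refine ⟨fun a₁ a₂ a₃ a₄ => mem (-a₁ + a₂ + a₃ + a₄) a₄ (a₂ + a₄ * D) (a₃ + a₄)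
      (by push_cast; ring) (by push_cast; ring) (by push_cast; ring),
    mem (-1) 0 0 0 (by simp) (by simp) (by simp) (by simp [IsOrientedCircle]),
    mem 1 0 1 0 (by simp) (by simp) (by simp) (by simp [IsOrientedCircle]),
    mem 1 0 0 1 (by simp) (by simp) (by simp) (by simp [IsOrientedCircle]),
    mem 1 1 D 1 (by push_cast; ring) (by push_cast; ring) (by simp) hv₄⟩

theorem stmt_9 (K : Type*) [Field K] [NumberField K] (ι : K →+* ℂ)
    (hdeg : Module.finrank ℚ K = 2) (him : ∃ x : K, (ι x).im ≠ 0)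
    (hΔ : NumberField.discr K < 0)
    (D : ℕ) (hD : 0 < D) (hs : ∃ s : K, ι s = Complex.I * Real.sqrt D) :
    (∀ a₁ a₂ a₃ a₄ : ℤ,
      IsOrientedCircle
        ((a₁ : ℂ) * (-1) + (a₂ : ℂ) * 1 + (a₃ : ℂ) * 1 +
          (a₄ : ℂ) * (1 + 2 * Complex.I * Real.sqrt D))
        ((a₂ : ℝ) * 2 + (a₄ : ℝ) * (2 * D)) ((a₃ : ℝ) * 2 + (a₄ : ℝ) * 2) →
      MemSD K ι D
        ((a₁ : ℂ) * (-1) + (a₂ : ℂ) * 1 + (a₃ : ℂ) * 1 +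
          (a₄ : ℂ) * (1 + 2 * Complex.I * Real.sqrt D))
        ((a₂ : ℝ) * 2 + (a₄ : ℝ) * (2 * D)) ((a₃ : ℝ) * 2 + (a₄ : ℝ) * 2)) ∧
    MemSD K ι D (-1) 0 0 ∧ MemSD K ι D 1 2 0 ∧ MemSD K ι D 1 0 2 ∧
    MemSD K ι D (1 + 2 * Complex.I * Real.sqrt D) (2 * D) 2 :=
  stmt_9_general K ι hdeg D hD hs
end
end

section
/- Let M = [[a, c], [b, d]] be a 2×2 matrix with entries in K and det M = ad − bc ≠ 0. Suppose α ∈ K satisfies α = (a·p + c·q)/(b·p + d·q) for some coprime integers p, q with b·p + d·q ≠ 0 (i.e., α lies on the image of the extended real line under M). Then there exists an integral ideal 𝔡 of 𝒪 with (det M)·(M)⁻² ⊆ 𝔡 ⊆ 𝒪 (as fractional ideals, i.e., 𝔡 divides (det M)/(M)²) such that the class of the fractional ideal (α, 1) in the class group of K equals the class of (M)·𝔡. -/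
open Complex NumberField ComplexConjugate
open scoped nonZeroDivisors

noncomputable section

/-!
With `γ = a p + c q` and `β = b p + d q`, the ideal `J = (γ, β)` lies in `G = (M)` and
`(α, 1) = β⁻¹ J`. Hence `𝔡 := G⁻¹ J` is integral and `G 𝔡 = J` has the class of `(α, 1)`.
Since `u p + v q = 1` for some integers `u, v`, we have
`det M = u (γ d - β c) + v (β a - γ b) ∈ J G`, so `(det M) G⁻² ⊆ J G G⁻² = 𝔡`.
-/

namespace FractionalIdeal

variable {R K : Type*} [CommRing R] [IsDedekindDomain R] [Field K] [Algebra R K]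
  [IsFractionRing R K] {I J : FractionalIdeal R⁰ K}

theorem exists_coeIdeal_eq_inv_mul_of_le (hJ : J ≠ 0) (h : I ≤ J) :
    ∃ 𝔡 : Ideal R, (𝔡 : FractionalIdeal R⁰ K) = J⁻¹ * I :=
  le_one_iff_exists_coeIdeal.mp <|
    (mul_le_mul_right (a := J⁻¹) h).trans (inv_mul_cancel₀ hJ).le

theorem spanSingleton_mul_inv_mul_inv_le {x : K} (hJ : J ≠ 0) (hx : x ∈ I * J) :
    spanSingleton R⁰ x * J⁻¹ * J⁻¹ ≤ J⁻¹ * I :=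
  calc spanSingleton R⁰ x * J⁻¹ * J⁻¹
      ≤ I * J * J⁻¹ * J⁻¹ := by gcongr; exact spanSingleton_le_iff_mem.mpr hx
    _ = J⁻¹ * I := by rw [mul_inv_cancel_right₀ hJ, mul_comm]

end FractionalIdeal

theorem Submodule.mul_intCast_add_mul_intCast_mem {R A : Type*} [Ring R] [Ring A] [Module R A]
    {S : Submodule R A} {x y : A} (hx : x ∈ S) (hy : y ∈ S) (m n : ℤ) : x * m + y * n ∈ S := by
  simpa only [zsmul_eq_mul, Int.cast_comm] using add_mem (zsmul_mem hx m) (zsmul_mem hy n)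

open FractionalIdeal

section NumberField

variable {K : Type*} [Field K] [NumberField K]

theorem classOf_spanSingleton_mul {u : K} (hu : u ≠ 0) (I : FractionalIdeal (𝓞 K)⁰ K) :
    classOf K (spanSingleton (𝓞 K)⁰ u * I) = classOf K I := by
  have hu' : spanSingleton (𝓞 K)⁰ u ≠ 0 := spanSingleton_ne_zero_iff.mpr hu
  by_cases hI : I = 0
  · simp [hI]
  have huI : spanSingleton (𝓞 K)⁰ u * I ≠ 0 := mul_ne_zero hu' hI
  have hprincipal : ClassGroup.mk K (Units.mk0 _ hu') = 1 :=
    ClassGroup.mk_eq_one_iff.mpr ⟨u, coe_spanSingleton _ u⟩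
  rw [classOf, classOf, dif_neg huI, dif_neg hI,
    show Units.mk0 _ huI = Units.mk0 _ hu' * Units.mk0 I hI from Units.ext rfl,
    map_mul, hprincipal, one_mul]

theorem coe_gen2 (x y : K) :
    (gen2 K x y : Submodule (𝓞 K) K) = Submodule.span (𝓞 K) {x, y} := by
  simp [gen2, coe_add, coe_spanSingleton, Submodule.span_insert]

theorem coe_gen4 (a b c d : K) :
    (gen4 K a b c d : Submodule (𝓞 K) K) = Submodule.span (𝓞 K) {a, b, c, d} := by
  simp [gen4, coe_add, coe_spanSingleton, Submodule.span_insert, sup_assoc]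

theorem gen2_ne_zero_of_right (x : K) {y : K} (hy : y ≠ 0) : gen2 K x y ≠ 0 := by
  intro h
  apply hy
  rw [← mem_zero_iff (S := (𝓞 K)⁰), ← h, ← mem_coe, coe_gen2]
  exact Submodule.subset_span (by simp)

theorem gen2_div_one (x : K) {y : K} (hy : y ≠ 0) :
    gen2 K (x / y) 1 = spanSingleton (𝓞 K)⁰ y⁻¹ * gen2 K x y := by
  rw [gen2, gen2, mul_add, spanSingleton_mul_spanSingleton, spanSingleton_mul_spanSingleton,
    inv_mul_cancel₀ hy, div_eq_inv_mul]

variable (a b c d : K)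

theorem gen2_le_gen4 (p q : ℤ) : gen2 K (a * p + c * q) (b * p + d * q) ≤ gen4 K a c b d := by
  rw [← coe_le_coe, coe_gen2, coe_gen4, Submodule.span_le, Set.insert_subset_iff,
    Set.singleton_subset_iff]
  have mem (x : K) (hx : x ∈ ({a, c, b, d} : Set K)) := Submodule.subset_span (R := 𝓞 K) hx
  exact ⟨Submodule.mul_intCast_add_mul_intCast_mem (mem a (by simp)) (mem c (by simp)) p q,
    Submodule.mul_intCast_add_mul_intCast_mem (mem b (by simp)) (mem d (by simp)) p q⟩

theorem det_mem_gen2_mul_gen4 {p q : ℤ} (hpq : IsCoprime p q) :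
    a * d - b * c ∈ gen2 K (a * p + c * q) (b * p + d * q) * gen4 K a c b d := by
  obtain ⟨u, v, huv⟩ := hpq
  set γ := a * p + c * q
  set β := b * p + d * q
  have hdet : a * d - b * c = (γ * d - β * c) * u + (β * a - γ * b) * v := by
    have huv' : (u : K) * p + v * q = 1 := by exact_mod_cast huv
    linear_combination (b * c - a * d) * huv'
  rw [hdet, ← mem_coe, coe_mul, coe_gen2, coe_gen4]
  have mem (x y : K) (hx : x ∈ ({γ, β} : Set K)) (hy : y ∈ ({a, c, b, d} : Set K)) :=
    Submodule.mul_mem_mul (Submodule.subset_span (R := 𝓞 K) hx)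
      (Submodule.subset_span (R := 𝓞 K) hy)
  exact Submodule.mul_intCast_add_mul_intCast_mem
    (sub_mem (mem γ d (by simp) (by simp)) (mem β c (by simp) (by simp)))
    (sub_mem (mem β a (by simp) (by simp)) (mem γ b (by simp) (by simp))) u v

end NumberField

theorem stmt_14_general (K : Type*) [Field K] [NumberField K]
    (a c b d : K) (α : K) (p q : ℤ)
    (hpq : IsCoprime p q) (hden : b * (p : K) + d * (q : K) ≠ 0)
    (hα : α = (a * (p : K) + c * (q : K)) / (b * (p : K) + d * (q : K))) :
    ∃ 𝔡 : Ideal (𝓞 K),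
      FractionalIdeal.spanSingleton (𝓞 K)⁰ (a * d - b * c) * (gen4 K a c b d)⁻¹ *
          (gen4 K a c b d)⁻¹ ≤ (𝔡 : FractionalIdeal (𝓞 K)⁰ K) ∧
      classOf K (gen2 K α 1) =
        classOf K (gen4 K a c b d * (𝔡 : FractionalIdeal (𝓞 K)⁰ K)) := by
  have hJG := gen2_le_gen4 a b c d p q
  have hG : gen4 K a c b d ≠ 0 := ne_bot_of_le_ne_bot (gen2_ne_zero_of_right _ hden) hJG
  obtain ⟨𝔡, h𝔡⟩ := exists_coeIdeal_eq_inv_mul_of_le hG hJG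
  refine ⟨𝔡, h𝔡 ▸ spanSingleton_mul_inv_mul_inv_le hG (det_mem_gen2_mul_gen4 a b c d hpq), ?_⟩
  rw [hα, gen2_div_one _ hden, classOf_spanSingleton_mul (inv_ne_zero hden), h𝔡,
    mul_inv_cancel_left₀ hG]

theorem stmt_14 (K : Type*) [Field K] [NumberField K]
    (hdeg : Module.finrank ℚ K = 2) (him : IsEmpty (K →+* ℝ))
    (a c b d : K) (hdet : a * d - b * c ≠ 0) (α : K) (p q : ℤ)
    (hpq : IsCoprime p q) (hden : b * (p : K) + d * (q : K) ≠ 0)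
    (hα : α = (a * (p : K) + c * (q : K)) / (b * (p : K) + d * (q : K))) :
    ∃ 𝔡 : Ideal (𝓞 K),
      FractionalIdeal.spanSingleton (𝓞 K)⁰ (a * d - b * c) * (gen4 K a c b d)⁻¹ *
          (gen4 K a c b d)⁻¹ ≤ (𝔡 : FractionalIdeal (𝓞 K)⁰ K) ∧
      classOf K (gen2 K α 1) =
        classOf K (gen4 K a c b d * (𝔡 : FractionalIdeal (𝓞 K)⁰ K)) :=
  stmt_14_general K a c b d α p q hpq hden hα
end
end
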